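/- arXiv:1511.00003 — 2 statements merged into one kernel-verified Lean document; each statement's English description precedes it below -/
import Mathlib

section
/- For every μ ∈ ℝ, the total variation distance between the Normal distributions N(μ,1) and N(0,1) satisfies ‖N(μ,1) − N(0,1)‖ = (2/√(2π)) ∫₀^{|μ|/2} e^{−x²/2} dx, and in particular ‖N(μ,1) − N(0,1)‖ ≤ |μ|/√(2π). -/
open MeasureTheory ProbabilityTheory

/-- Total variation distance between two measures on `ℝ`:
`sup_A |P(A) - Q(A)|` over measurable sets `A`. -/
noncomputable def tvDist (P Q : Measure ℝ) : ℝ :=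
  ⨆ A : {s : Set ℝ // MeasurableSet s}, |(P A.1).toReal - (Q A.1).toReal|

/-!
Both measures have densities, so `P(A) - Q(A) = ∫_A (f - g)`; since the total masses agree, this
is maximised in absolute value by `A = {f > g}` (Scheffé). For `N(μ,1)` and `N(0,1)` with `μ ≥ 0`
that set is `(μ/2, ∞)`, and by translation and the evenness of the standard density the
maximum is the standard Gaussian mass of `[-μ/2, μ/2]`. Reflection `x ↦ -x` reduces `μ < 0`
to `μ ≥ 0`, and `e^{-x²/2} ≤ 1` gives the bound.
-/

open Set

section Scheffe

variable {α : Type*} [MeasurableSpace α] {ν : Measure α} {f g : α → ℝ} {S s : Set α}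

theorem setIntegral_sub_le_of_separates (hf : Integrable f ν) (hg : Integrable g ν)
    (hS : MeasurableSet S) (hfg : ∀ x ∈ S, g x ≤ f x) (hgf : ∀ x ∉ S, f x ≤ g x)
    (hs : MeasurableSet s) :
    ∫ x in s, (f x - g x) ∂ν ≤ ∫ x in S, (f x - g x) ∂ν := by
  have hint : Integrable (fun x => f x - g x) ν := hf.sub hg
  have hout : ∫ x in s \ S, (f x - g x) ∂ν ≤ 0 :=
    setIntegral_nonpos (hs.diff hS) fun x hx => sub_nonpos.2 (hgf x hx.2)
  have hin : ∫ x in s ∩ S, (f x - g x) ∂ν ≤ ∫ x in S, (f x - g x) ∂ν :=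
    setIntegral_mono_set hint.integrableOn
      ((ae_restrict_iff' hS).2 (ae_of_all _ fun x hx => sub_nonneg.2 (hfg x hx)))
      (inter_subset_right (s := s)).eventuallyLE
  linarith [integral_inter_add_sdiff hS hint.integrableOn (s := s)]

theorem abs_setIntegral_sub_le_of_separates (hf : Integrable f ν) (hg : Integrable g ν)
    (htot : ∫ x, f x ∂ν = ∫ x, g x ∂ν)
    (hS : MeasurableSet S) (hfg : ∀ x ∈ S, g x ≤ f x) (hgf : ∀ x ∉ S, f x ≤ g x)
    (hs : MeasurableSet s) :
    |∫ x in s, (f x - g x) ∂ν| ≤ ∫ x in S, (f x - g x) ∂ν := by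
  have hsplit : ∫ x in s, (f x - g x) ∂ν + ∫ x in sᶜ, (f x - g x) ∂ν = 0 := by
    rw [integral_add_compl (f := fun x => f x - g x) hs (hf.sub hg), integral_sub hf hg, htot,
      sub_self]
  rw [abs_le]
  constructor
  · linarith [setIntegral_sub_le_of_separates hf hg hS hfg hgf hs.compl]
  · exact setIntegral_sub_le_of_separates hf hg hS hfg hgf hs

end Scheffe

theorem tvDist_eq_setIntegral_sub {P Q : Measure ℝ} {f g : ℝ → ℝ} (hf : Integrable f)
    (hg : Integrable g) (hP : ∀ s, (P s).toReal = ∫ x in s, f x)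
    (hQ : ∀ s, (Q s).toReal = ∫ x in s, g x) (hPQ : P univ = Q univ)
    {S : Set ℝ} (hS : MeasurableSet S) (hfg : ∀ x ∈ S, g x ≤ f x) (hgf : ∀ x ∉ S, f x ≤ g x) :
    tvDist P Q = ∫ x in S, (f x - g x) := by
  have hdiff : ∀ s, (P s).toReal - (Q s).toReal = ∫ x in s, (f x - g x) := fun s => by
    rw [hP, hQ, integral_sub hf.integrableOn hg.integrableOn]
  have htot : ∫ x, f x = ∫ x, g x := by
    simpa only [hP, hQ, setIntegral_univ] using congrArg ENNReal.toReal hPQ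
  have hle : ∀ A : {s : Set ℝ // MeasurableSet s}, |(P A.1).toReal - (Q A.1).toReal| ≤
      ∫ x in S, (f x - g x) := fun A => by
    rw [hdiff]
    exact abs_setIntegral_sub_le_of_separates hf hg htot hS hfg hgf A.2
  refine le_antisymm (ciSup_le hle) ?_
  calc ∫ x in S, (f x - g x) = (P S).toReal - (Q S).toReal := (hdiff S).symm
    _ ≤ |(P S).toReal - (Q S).toReal| := le_abs_self _
    _ ≤ tvDist P Q := le_ciSup ⟨_, forall_mem_range.2 hle⟩ ⟨S, hS⟩

theorem tvDist_map_measurableEquiv (P Q : Measure ℝ) (e : ℝ ≃ᵐ ℝ) :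
    tvDist (P.map e) (Q.map e) = tvDist P Q := by
  have hpreimage_surj : Function.Surjective fun A : {s : Set ℝ // MeasurableSet s} =>
      (⟨e ⁻¹' A.1, e.measurableSet_preimage.2 A.2⟩ : {s : Set ℝ // MeasurableSet s}) :=
    fun A => ⟨⟨e '' A.1, e.measurableSet_image.2 A.2⟩, Subtype.ext (e.preimage_image A.1)⟩
  unfold tvDist
  rw [← hpreimage_surj.iSup_comp fun A => |(P A.1).toReal - (Q A.1).toReal|]
  simp only [e.map_apply]

theorem gaussianReal_toReal_apply (m : ℝ) {v : NNReal} (hv : v ≠ 0) (s : Set ℝ) :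
    (gaussianReal m v s).toReal = ∫ x in s, gaussianPDFReal m v x := by
  rw [gaussianReal_apply_eq_integral m hv s,
    ENNReal.toReal_ofReal (integral_nonneg fun x => gaussianPDFReal_nonneg m v x)]

theorem setIntegral_Ioi_comp_sub_right {E : Type*} [NormedAddCommGroup E] [NormedSpace ℝ E]
    (f : ℝ → E) (a c : ℝ) : ∫ x in Ioi a, f (x - c) = ∫ x in Ioi (a - c), f x := by
  rw [← (measurePreserving_sub_right volume c).setIntegral_preimage_emb
    (MeasurableEquiv.subRight c).measurableEmbedding f (Ioi (a - c))]
  simp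

theorem intervalIntegral.integral_neg_self_of_even {E : Type*} [NormedAddCommGroup E]
    [NormedSpace ℝ E] {f : ℝ → E} (heven : ∀ x, f (-x) = f x) {a : ℝ}
    (hf : IntervalIntegrable f volume (-a) a) :
    ∫ x in -a..a, f x = (2 : ℝ) • ∫ x in 0..a, f x := by
  have hleft : ∫ x in -a..0, f x = ∫ x in 0..a, f x := by
    simpa only [heven, neg_zero] using
      (intervalIntegral.integral_comp_neg (a := 0) (b := a) f).symm
  have h0 : (0 : ℝ) ∈ uIcc (-a) a := by
    rw [mem_uIcc]
    grind
  rw [← intervalIntegral.integral_add_adjacent_intervals (b := 0)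
    (hf.mono_set (uIcc_subset_uIcc_left h0)) (hf.mono_set (uIcc_subset_uIcc_right h0)), hleft,
    two_smul]

theorem gaussianPDFReal_le_gaussianPDFReal_iff {v : NNReal} (hv : v ≠ 0) {m m' x : ℝ} :
    gaussianPDFReal m v x ≤ gaussianPDFReal m' v x ↔ (x - m') ^ 2 ≤ (x - m) ^ 2 := by
  have hv' : (0 : ℝ) < v := by positivity
  rw [gaussianPDFReal, gaussianPDFReal, mul_le_mul_iff_right₀ (by positivity), Real.exp_le_exp,
    div_le_div_iff_of_pos_right (by positivity), neg_le_neg_iff]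

theorem gaussianPDFReal_zero_one (x : ℝ) :
    gaussianPDFReal 0 1 x = (Real.sqrt (2 * Real.pi))⁻¹ * Real.exp (-x ^ 2 / 2) := by
  simp [gaussianPDFReal]

theorem setIntegral_Ioi_half_gaussianPDFReal_sub (μ : ℝ) :
    ∫ x in Ioi (μ / 2), (gaussianPDFReal μ 1 x - gaussianPDFReal 0 1 x) =
      (2 / Real.sqrt (2 * Real.pi)) * ∫ x in (0 : ℝ)..(μ / 2), Real.exp (-x ^ 2 / 2) := by
  set φ := gaussianPDFReal 0 1
  have hφ : Integrable φ := integrable_gaussianPDFReal 0 1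
  have hshift : ∫ x in Ioi (μ / 2), gaussianPDFReal μ 1 x = ∫ x in Ioi (-(μ / 2)), φ x := by
    rw [show -(μ / 2) = μ / 2 - μ by ring, ← setIntegral_Ioi_comp_sub_right]
    simp only [φ, gaussianPDFReal_sub, zero_add]
  have heven : ∀ x, φ (-x) = φ x := fun x => by simp only [φ, gaussianPDFReal_zero_one, neg_sq]
  rw [integral_sub (integrable_gaussianPDFReal μ 1).integrableOn hφ.integrableOn, hshift,
    intervalIntegral.integral_Ioi_sub_Ioi' hφ.integrableOn hφ.integrableOn,
    intervalIntegral.integral_neg_self_of_even heven hφ.intervalIntegrable]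
  simp only [φ, gaussianPDFReal_zero_one, intervalIntegral.integral_const_mul, smul_eq_mul]
  ring

theorem tvDist_gaussianReal_one_zero_of_nonneg {μ : ℝ} (hμ : 0 ≤ μ) :
    tvDist (gaussianReal μ 1) (gaussianReal 0 1) =
      (2 / Real.sqrt (2 * Real.pi)) * ∫ x in (0 : ℝ)..(μ / 2), Real.exp (-x ^ 2 / 2) := by
  rw [tvDist_eq_setIntegral_sub (integrable_gaussianPDFReal μ 1) (integrable_gaussianPDFReal 0 1)
    (gaussianReal_toReal_apply μ one_ne_zero) (gaussianReal_toReal_apply 0 one_ne_zero)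
    (by simp only [measure_univ]) measurableSet_Ioi, setIntegral_Ioi_half_gaussianPDFReal_sub]
  · intro x hx
    rw [gaussianPDFReal_le_gaussianPDFReal_iff one_ne_zero]
    nlinarith [mem_Ioi.1 hx]
  · intro x hx
    rw [gaussianPDFReal_le_gaussianPDFReal_iff one_ne_zero]
    nlinarith [notMem_Ioi.1 hx]

theorem tvDist_gaussianReal_neg (μ ν : ℝ) (v w : NNReal) :
    tvDist (gaussianReal (-μ) v) (gaussianReal (-ν) w) =
      tvDist (gaussianReal μ v) (gaussianReal ν w) := by
  rw [← tvDist_map_measurableEquiv (gaussianReal μ v) (gaussianReal ν w) (MeasurableEquiv.neg ℝ)]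
  exact congrArg₂ tvDist gaussianReal_map_neg.symm gaussianReal_map_neg.symm

theorem tvDist_gaussianReal_one_zero (μ : ℝ) :
    tvDist (gaussianReal μ 1) (gaussianReal 0 1) =
      (2 / Real.sqrt (2 * Real.pi)) * ∫ x in (0 : ℝ)..(|μ| / 2), Real.exp (-x ^ 2 / 2) := by
  rcases le_total 0 μ with hμ | hμ
  · rw [abs_of_nonneg hμ, tvDist_gaussianReal_one_zero_of_nonneg hμ]
  · have hreflect := tvDist_gaussianReal_neg (-μ) 0 1 1
    rw [neg_neg, neg_zero] at hreflect
    rw [abs_of_nonpos hμ, hreflect, tvDist_gaussianReal_one_zero_of_nonneg (neg_nonneg.2 hμ)]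

theorem intervalIntegral_exp_neg_sq_div_two_le {a : ℝ} (ha : 0 ≤ a) :
    ∫ x in (0 : ℝ)..a, Real.exp (-x ^ 2 / 2) ≤ a := by
  calc ∫ x in (0 : ℝ)..a, Real.exp (-x ^ 2 / 2) ≤ ∫ _ in (0 : ℝ)..a, (1 : ℝ) :=
        intervalIntegral.integral_mono_on ha (Continuous.intervalIntegrable (by fun_prop) _ _)
          intervalIntegrable_const
          fun x _ => Real.exp_le_one_iff.2 (by nlinarith [sq_nonneg x])
    _ = a := by simp

/-- For every `μ ∈ ℝ`,
`‖N(μ,1) − N(0,1)‖ = (2/√(2π)) ∫₀^{|μ|/2} e^{-x²/2} dx`, and in particular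
`‖N(μ,1) − N(0,1)‖ ≤ |μ|/√(2π)`. -/
theorem tvDist_gaussian_one
    (μ : ℝ) :
    tvDist (gaussianReal μ 1) (gaussianReal 0 1) =
        (2 / Real.sqrt (2 * Real.pi)) *
          ∫ x in (0:ℝ)..(|μ| / 2), Real.exp (-x ^ 2 / 2) ∧
      tvDist (gaussianReal μ 1) (gaussianReal 0 1) ≤ |μ| / Real.sqrt (2 * Real.pi) := by
  refine ⟨tvDist_gaussianReal_one_zero μ, ?_⟩
  calc tvDist (gaussianReal μ 1) (gaussianReal 0 1)
      ≤ (2 / Real.sqrt (2 * Real.pi)) * (|μ| / 2) := by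
        rw [tvDist_gaussianReal_one_zero]
        gcongr
        exact intervalIntegral_exp_neg_sq_div_two_le (by positivity)
    _ = |μ| / Real.sqrt (2 * Real.pi) := by field_simp
end

section
/- Let (Ω, ℱ, ℙ) be a probability space, let X, Y be integrable real random variables, let σ > 0, and let Z be a real random variable with distribution N(0, σ²) that is independent of the σ-algebra generated by X and Y. Then the total variation distance between the laws of X + Z and Y + Z satisfies ‖law(X + Z) − law(Y + Z)‖ ≤ (1/(√(2π) σ)) E[|X − Y|]. -/
/-!
Given `(X, Y)`, the law of `X + Z` is the mixture `∫ N(X ω, σ²) dP`, so it suffices to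
bound `|N(x, σ²)(A) − N(y, σ²)(A)|` by `|x − y| / (√(2π) σ)`. For `x ≤ y` the density of
`N(x, σ²)` dominates that of `N(y, σ²)` exactly left of the midpoint `m = (x + y) / 2`, so the
excess of `N(x, σ²)` over `N(y, σ²)` on any set is at most its excess on `(-∞, m]`. That excess
is the `N(y, σ²)`-mass of an interval of length `y − x`, at most `y − x` times the peak
density.
-/

open MeasureTheory ProbabilityTheory

open Set Real
open scoped NNReal ENNReal

theorem ENNReal.abs_toReal_sub_le_of_le_add {a b : ℝ≥0∞} {d : ℝ} (ha : a ≠ ∞) (hb : b ≠ ∞)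
    (hd : 0 ≤ d) (hab : a ≤ b + ENNReal.ofReal d) (hba : b ≤ a + ENNReal.ofReal d) :
    |a.toReal - b.toReal| ≤ d := by
  have key : ∀ {p q : ℝ≥0∞}, p ≠ ∞ → q ≠ ∞ → p ≤ q + ENNReal.ofReal d →
      p.toReal - q.toReal ≤ d :=
    fun hp hq h => by
      have := ENNReal.toReal_mono (by finiteness) h
      rw [ENNReal.toReal_add hq ENNReal.ofReal_ne_top, ENNReal.toReal_ofReal hd] at this
      linarith
  exact abs_sub_le_iff.mpr ⟨key ha hb hab, key hb ha hba⟩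

theorem MeasureTheory.measure_le_add_of_restrict_le {α : Type*} [MeasurableSpace α]
    {μ ν : Measure α} [IsFiniteMeasure ν] {S : Set α} (hS : MeasurableSet S)
    (h_in : ν.restrict S ≤ μ.restrict S) (h_out : μ.restrict Sᶜ ≤ ν.restrict Sᶜ)
    {δ : ℝ≥0∞} (hδ : μ S ≤ ν S + δ) {A : Set α} (hA : MeasurableSet A) :
    μ A ≤ ν A + δ := by
  have h_out' : μ (A \ S) ≤ ν (A \ S) := by
    simpa [Measure.restrict_apply' hS.compl, sdiff_eq] using h_out A
  have h_in' : ν (S \ A) ≤ μ (S \ A) := by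
    simpa [Measure.restrict_apply' hS, sdiff_eq, inter_comm] using h_in Aᶜ
  have h_inter : μ (A ∩ S) ≤ ν (A ∩ S) + δ := by
    refine ENNReal.le_of_add_le_add_right (measure_ne_top ν (S \ A)) ?_
    calc μ (A ∩ S) + ν (S \ A) ≤ μ (S ∩ A) + μ (S \ A) := by
          rw [inter_comm]; exact add_le_add le_rfl h_in'
      _ = μ S := measure_inter_add_sdiff S hA
      _ ≤ ν S + δ := hδ
      _ = ν (A ∩ S) + δ + ν (S \ A) := by
          rw [← measure_inter_add_sdiff S hA, inter_comm]; ring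
  calc μ A = μ (A ∩ S) + μ (A \ S) := (measure_inter_add_sdiff A hS).symm
    _ ≤ ν (A ∩ S) + δ + ν (A \ S) := add_le_add h_inter h_out'
    _ = ν A + δ := by rw [← measure_inter_add_sdiff A hS]; ring

namespace ProbabilityTheory

variable {v : ℝ≥0}

theorem gaussianPDFReal_le_inv_sqrt (μ t : ℝ) :
    gaussianPDFReal μ v t ≤ (√(2 * π * v))⁻¹ := by
  rw [gaussianPDFReal]
  refine mul_le_of_le_one_right (by positivity) (Real.exp_le_one_iff.mpr ?_)
  exact div_nonpos_of_nonpos_of_nonneg (neg_nonpos.mpr (sq_nonneg _)) (by positivity)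

theorem gaussianPDF_le_of_sq_le {x y t : ℝ} (h : (t - x) ^ 2 ≤ (t - y) ^ 2) :
    gaussianPDF y v t ≤ gaussianPDF x v t := by
  refine ENNReal.ofReal_le_ofReal (mul_le_mul_of_nonneg_left ?_ (by positivity))
  exact Real.exp_le_exp.mpr (div_le_div_of_nonneg_right (neg_le_neg h) (by positivity))

theorem gaussianReal_le_mul_volume (hv : v ≠ 0) (μ : ℝ) (s : Set ℝ) :
    gaussianReal μ v s ≤ ENNReal.ofReal (√(2 * π * v))⁻¹ * volume s := by
  rw [gaussianReal_apply μ hv, ← setLIntegral_const]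
  exact setLIntegral_mono measurable_const
    fun t _ => ENNReal.ofReal_le_ofReal (gaussianPDFReal_le_inv_sqrt μ t)

theorem gaussianReal_restrict_le_of_sq_le (hv : v ≠ 0) {x y : ℝ} {S : Set ℝ}
    (hS : MeasurableSet S) (h : ∀ t ∈ S, (t - x) ^ 2 ≤ (t - y) ^ 2) :
    (gaussianReal y v).restrict S ≤ (gaussianReal x v).restrict S := by
  rw [gaussianReal_of_var_ne_zero _ hv, gaussianReal_of_var_ne_zero _ hv,
    restrict_withDensity hS, restrict_withDensity hS]
  exact withDensity_mono ((ae_restrict_iff' hS).mpr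
    (ae_of_all _ fun t ht => gaussianPDF_le_of_sq_le (h t ht)))

theorem gaussianReal_Iic_le_add (hv : v ≠ 0) {x y : ℝ} (hxy : x ≤ y) (m : ℝ) :
    gaussianReal x v (Iic m)
      ≤ gaussianReal y v (Iic m) + ENNReal.ofReal ((√(2 * π * v))⁻¹ * (y - x)) := by
  have h_shift : gaussianReal x v (Iic m) = gaussianReal y v (Iic (m + (y - x))) := by
    have : gaussianReal y v = (gaussianReal x v).map (· + (y - x)) := by
      rw [gaussianReal_map_add_const, add_sub_cancel]
    rw [this, Measure.map_apply (measurable_add_const _) measurableSet_Iic,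
      preimage_add_const_Iic, add_sub_cancel_right]
  calc gaussianReal x v (Iic m) = gaussianReal y v (Iic (m + (y - x))) := h_shift
    _ ≤ gaussianReal y v (Iic m) + gaussianReal y v (Ioc m (m + (y - x))) := by
      rw [← Iic_union_Ioc_eq_Iic (by linarith)]
      exact measure_union_le _ _
    _ ≤ gaussianReal y v (Iic m) + ENNReal.ofReal ((√(2 * π * v))⁻¹ * (y - x)) := by
      gcongr
      refine (gaussianReal_le_mul_volume hv y _).trans_eq ?_
      rw [Real.volume_Ioc, ← ENNReal.ofReal_mul (by positivity)]
      ring_nf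

theorem gaussianReal_apply_le_add_of_le (hv : v ≠ 0) {x y : ℝ} (hxy : x ≤ y) {A : Set ℝ}
    (hA : MeasurableSet A) :
    gaussianReal x v A ≤ gaussianReal y v A + ENNReal.ofReal ((√(2 * π * v))⁻¹ * (y - x)) := by
  refine measure_le_add_of_restrict_le measurableSet_Iic (S := Iic ((x + y) / 2)) ?_ ?_
    (gaussianReal_Iic_le_add hv hxy _) hA
  · refine gaussianReal_restrict_le_of_sq_le hv measurableSet_Iic fun t ht => ?_
    rw [mem_Iic] at ht
    nlinarith
  · refine gaussianReal_restrict_le_of_sq_le hv measurableSet_Iic.compl fun t ht => ?_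
    rw [mem_compl_iff, mem_Iic, not_le] at ht
    nlinarith

theorem gaussianReal_apply_le_add (hv : v ≠ 0) (x y : ℝ) {A : Set ℝ}
    (hA : MeasurableSet A) :
    gaussianReal x v A ≤ gaussianReal y v A + ENNReal.ofReal ((√(2 * π * v))⁻¹ * |x - y|) := by
  rcases le_total x y with hxy | hyx
  · rw [abs_sub_comm, abs_of_nonneg (sub_nonneg.mpr hxy)]
    exact gaussianReal_apply_le_add_of_le hv hxy hA
  · have h_neg (z : ℝ) : gaussianReal z v A = gaussianReal (-z) v (Neg.neg ⁻¹' A) := by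
      rw [← Measure.map_apply measurable_neg hA, gaussianReal_map_neg, neg_neg]
    rw [h_neg x, h_neg y, abs_of_nonneg (sub_nonneg.mpr hyx), ← neg_sub_neg]
    exact gaussianReal_apply_le_add_of_le hv (neg_le_neg hyx) (measurable_neg hA)

theorem measurable_gaussianReal_apply (v : ℝ≥0) {A : Set ℝ} (hA : MeasurableSet A) :
    Measurable fun x => gaussianReal x v A :=
  (Measure.measurable_coe hA).comp
    (measurable_gaussianReal.comp (measurable_id.prodMk measurable_const))

theorem conv_gaussianReal_apply (μ : Measure ℝ) (v : ℝ≥0) {A : Set ℝ}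
    (hA : MeasurableSet A) :
    (μ ∗ gaussianReal 0 v) A = ∫⁻ x, gaussianReal x v A ∂μ := by
  rw [← lintegral_indicator_one hA, Measure.lintegral_conv (measurable_one.indicator hA)]
  refine lintegral_congr fun x => ?_
  have h_shift : gaussianReal x v = (gaussianReal 0 v).map (x + ·) := by
    rw [gaussianReal_map_const_add, zero_add]
  rw [h_shift, ← lintegral_indicator_one hA,
    lintegral_map (measurable_one.indicator hA) (measurable_const_add x)]

variable {Ω : Type*} [MeasurableSpace Ω] {P : Measure Ω} [IsFiniteMeasure P] {U V Z : Ω → ℝ}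

theorem map_add_apply_eq_lintegral_gaussianReal (hU : Measurable U) (hZ : Measurable Z)
    (hZlaw : P.map Z = gaussianReal 0 v) (hUZ : IndepFun U Z P) {A : Set ℝ}
    (hA : MeasurableSet A) :
    P.map (fun ω => U ω + Z ω) A = ∫⁻ ω, gaussianReal (U ω) v A ∂P := by
  rw [show (fun ω => U ω + Z ω) = U + Z from rfl, hUZ.map_add_eq_map_conv_map hU hZ, hZlaw,
    conv_gaussianReal_apply _ _ hA, lintegral_map (measurable_gaussianReal_apply v hA) hU]

theorem map_add_apply_le_add_of_gaussianReal (hv : v ≠ 0) (hU : Measurable U)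
    (hV : Measurable V) (hZ : Measurable Z) (hZlaw : P.map Z = gaussianReal 0 v)
    (hUZ : IndepFun U Z P) (hVZ : IndepFun V Z P) (hUV : Integrable (fun ω => U ω - V ω) P)
    {A : Set ℝ} (hA : MeasurableSet A) :
    P.map (fun ω => U ω + Z ω) A
      ≤ P.map (fun ω => V ω + Z ω) A
        + ENNReal.ofReal ((√(2 * π * v))⁻¹ * ∫ ω, |U ω - V ω| ∂P) := by
  rw [map_add_apply_eq_lintegral_gaussianReal hU hZ hZlaw hUZ hA,
    map_add_apply_eq_lintegral_gaussianReal hV hZ hZlaw hVZ hA, ← integral_const_mul,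
    ofReal_integral_eq_lintegral_ofReal (hUV.abs.const_mul _)
      (ae_of_all _ fun _ => by positivity),
    ← lintegral_add_right _ (by fun_prop)]
  exact lintegral_mono fun ω => gaussianReal_apply_le_add hv (U ω) (V ω) hA

end ProbabilityTheory

/-- Gaussian smoothing bound. If `X, Y` are integrable real random
variables, `σ > 0` and `Z ∼ N(0,σ²)` is independent of `σ(X,Y)`, then
`‖law(X+Z) − law(Y+Z)‖ ≤ (1/(√(2π) σ)) E|X − Y|`. -/
theorem tvDist_add_gaussian_le
    {Ω : Type*} [MeasurableSpace Ω] (P : Measure Ω) [IsProbabilityMeasure P]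
    (X Y Z : Ω → ℝ) (σ : ℝ) (hσ : 0 < σ)
    (hX : Measurable X) (hY : Measurable Y) (hZ : Measurable Z)
    (hXint : Integrable X P) (hYint : Integrable Y P)
    (hZlaw : Measure.map Z P = gaussianReal 0 (σ ^ 2).toNNReal)
    (hindep : IndepFun Z (fun ω => (X ω, Y ω)) P) :
    tvDist (Measure.map (fun ω => X ω + Z ω) P)
        (Measure.map (fun ω => Y ω + Z ω) P) ≤
      (1 / (Real.sqrt (2 * Real.pi) * σ)) * ∫ ω, |X ω - Y ω| ∂P := by
  set v : ℝ≥0 := (σ ^ 2).toNNReal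
  have hv : v ≠ 0 := by simpa [v] using hσ.ne'
  have hc : 1 / (√(2 * π) * σ) = (√(2 * π * v))⁻¹ := by
    rw [Real.coe_toNNReal _ (sq_nonneg σ), Real.sqrt_mul (by positivity) (σ ^ 2),
      Real.sqrt_sq hσ.le, one_div]
  have hXZ : IndepFun X Z P := hindep.symm.comp measurable_fst measurable_id
  have hYZ : IndepFun Y Z P := hindep.symm.comp measurable_snd measurable_id
  refine Real.iSup_le (fun A => ?_) (by positivity)
  rw [hc]
  refine ENNReal.abs_toReal_sub_le_of_le_add (measure_ne_top _ _) (measure_ne_top _ _)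
    (by positivity) (map_add_apply_le_add_of_gaussianReal hv hX hY hZ hZlaw hXZ hYZ
      (hXint.sub hYint) A.2) ?_
  simpa only [abs_sub_comm] using
    map_add_apply_le_add_of_gaussianReal hv hY hX hZ hZlaw hYZ hXZ (hYint.sub hXint) A.2
end
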